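/- arXiv:2601.18813 — 5 statements merged into one kernel-verified Lean document; each statement's English description precedes it below -/
import Mathlib

section
/- Let b be a square both of whose coordinates lie in {1,...,6} (a black king not on the edge of the board), let K be a square with K ≠ b that is not king-adjacent to b (the white king), and let r be a square with r ≠ b and r ≠ K (a white rook). Then there exists a square s that is king-adjacent to b such that s ≠ K, s is not king-adjacent to K, and the rook on r does not attack s given blockers {K}. (This is the formal core of the paper's Lemma 9: a lone white king and rook can never checkmate or stalemate a black king that is not on the edge — the black king always has a safe move, possibly capturing an undefended rook, since a rook never attacks its own square.) -/
/-- A chessboard square: (file, rank) coordinates. -/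
abbrev Square := Fin 8 × Fin 8

/-- File of a square, as an integer. -/
def fz (s : Square) : ℤ := (s.1 : ℤ)

/-- Rank of a square, as an integer. -/
def rz (s : Square) : ℤ := (s.2 : ℤ)

/-- A square as a point of `ℤ × ℤ`. -/
def zpt (s : Square) : ℤ × ℤ := (fz s, rz s)

/-- Chebyshev distance between two squares. -/
def cheb (p q : Square) : ℤ := max |fz p - fz q| |rz p - rz q|

/-- Two squares are king-adjacent: distinct and at Chebyshev distance exactly 1. -/
def kingAdj (p q : Square) : Prop := p ≠ q ∧ cheb p q = 1

/-- `t` lies strictly between `p` and `q` on the line through `p` and `q`: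
`t` is collinear with `p` and `q`, distinct from both, and lies within the
bounding box of the segment. -/
def strictlyBetween (p t q : ℤ × ℤ) : Prop :=
  (t.1 - p.1) * (q.2 - p.2) = (t.2 - p.2) * (q.1 - p.1) ∧
  t ≠ p ∧ t ≠ q ∧
  min p.1 q.1 ≤ t.1 ∧ t.1 ≤ max p.1 q.1 ∧
  min p.2 q.2 ≤ t.2 ∧ t.2 ≤ max p.2 q.2

/-- A rook on `r` attacks `s` given blockers `B`: `r ≠ s`, they share a file or
a rank, and no blocker lies strictly between them on that line. -/
def rookAttacks (B : Set Square) (r s : Square) : Prop :=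
  r ≠ s ∧ (r.1 = s.1 ∨ r.2 = s.2) ∧
  ∀ t ∈ B, ¬ strictlyBetween (zpt r) (zpt t) (zpt s)

/-- A queen on `q` attacks `s` given blockers `B`: `q ≠ s`, they share a file,
a rank, or a diagonal, and no blocker lies strictly between them on that line. -/
def queenAttacks (B : Set Square) (q s : Square) : Prop :=
  q ≠ s ∧ (q.1 = s.1 ∨ q.2 = s.2 ∨ |fz q - fz s| = |rz q - rz s|) ∧
  ∀ t ∈ B, ¬ strictlyBetween (zpt q) (zpt t) (zpt s)

/-!
The white king stands at Chebyshev distance at least `2` from `b`, say along the files. Then every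
square on `b`'s file or on the neighbouring file away from `K` is out of the white king's reach;
one of these two files differs from the rook's file, and one of the two ranks next to `b`'s rank
(both on the board, as `b` is not on the edge) differs from the rook's rank. The resulting square is
next to `b`, and the rook shares neither its file nor its rank.
-/

theorem Fin.exists_near_far_ne {n : ℕ} (x : Fin n) (hx : 1 ≤ (x : ℕ)) (hx' : (x : ℕ) + 1 < n)
    {k : ℤ} (hk : 2 ≤ |k - x|) (a : Fin n) :
    ∃ y : Fin n, |(y : ℤ) - x| ≤ 1 ∧ 2 ≤ |(y : ℤ) - k| ∧ y ≠ a := by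
  obtain ⟨z, hzx, hzk⟩ : ∃ z : Fin n, |(z : ℤ) - x| = 1 ∧ 2 ≤ |(z : ℤ) - k| := by
    rcases le_abs'.1 hk with hk | hk
    · exact ⟨⟨x + 1, hx'⟩, by simp, by rw [abs_sub_comm]; push_cast; exact le_abs'.2 (by omega)⟩
    · exact ⟨⟨x - 1, by omega⟩, by simp [Nat.cast_sub hx], by
        push_cast [Nat.cast_sub hx]; exact le_abs'.2 (by omega)⟩
  by_cases ha : x = a
  · exact ⟨z, hzx.le, hzk, fun h => by simp [h, ← ha] at hzx⟩
  · exact ⟨x, by simp, by rwa [abs_sub_comm], ha⟩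

theorem Fin.exists_dist_eq_one_ne {n : ℕ} (x : Fin n) (hx : 1 ≤ (x : ℕ)) (hx' : (x : ℕ) + 1 < n)
    (a : Fin n) : ∃ y : Fin n, |(y : ℤ) - x| = 1 ∧ y ≠ a := by
  by_cases ha : (x : ℕ) + 1 = a
  · exact ⟨⟨x - 1, by omega⟩, by simp [Nat.cast_sub hx], fun h => by simp [← h] at ha; omega⟩
  · exact ⟨⟨x + 1, hx'⟩, by simp, fun h => ha (by simp [← h])⟩

theorem Square.ext_of_fz_rz {p q : Square} (h₁ : fz p = fz q) (h₂ : rz p = rz q) : p = q :=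
  Prod.ext (Fin.ext (by simpa [fz] using h₁)) (Fin.ext (by simpa [rz] using h₂))

theorem cheb_nonneg (p q : Square) : 0 ≤ cheb p q :=
  le_max_of_le_left (abs_nonneg _)

theorem cheb_eq_zero_iff {p q : Square} : cheb p q = 0 ↔ p = q := by
  refine ⟨fun h => ?_, fun h => by subst h; simp [cheb]⟩
  have h₁ : |fz p - fz q| ≤ 0 := h ▸ le_max_left _ _
  have h₂ : |rz p - rz q| ≤ 0 := h ▸ le_max_right _ _
  exact Square.ext_of_fz_rz (by linarith [abs_nonpos_iff.1 h₁]) (by linarith [abs_nonpos_iff.1 h₂])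

theorem kingAdj_iff_cheb_eq_one {p q : Square} : kingAdj p q ↔ cheb p q = 1 :=
  ⟨And.right, fun h => ⟨fun hpq => zero_ne_one ((cheb_eq_zero_iff.2 hpq).symm.trans h), h⟩⟩

theorem two_le_cheb_iff {p q : Square} : 2 ≤ cheb p q ↔ p ≠ q ∧ ¬ kingAdj p q := by
  rw [kingAdj_iff_cheb_eq_one, ne_eq, ← cheb_eq_zero_iff]
  have := cheb_nonneg p q
  omega

theorem not_rookAttacks_of_ne_of_ne {B : Set Square} {r s : Square} (h₁ : s.1 ≠ r.1)
    (h₂ : s.2 ≠ r.2) : ¬ rookAttacks B r s :=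
  fun h => h.2.1.elim (fun h' => h₁ h'.symm) (fun h' => h₂ h'.symm)

theorem black_king_not_on_edge_has_safe_square_general
    (b K r : Square)
    (hb1 : 1 ≤ (b.1 : ℕ)) (hb1' : (b.1 : ℕ) ≤ 6)
    (hb2 : 1 ≤ (b.2 : ℕ)) (hb2' : (b.2 : ℕ) ≤ 6)
    (hKb : K ≠ b) (hKadj : ¬ kingAdj K b) :
    ∃ s : Square, kingAdj s b ∧ s ≠ K ∧ ¬ kingAdj s K ∧
      ¬ rookAttacks {K} r s := by
  have safe : ∀ s : Square, cheb s b = 1 → 2 ≤ cheb s K → s.1 ≠ r.1 → s.2 ≠ r.2 →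
      kingAdj s b ∧ s ≠ K ∧ ¬ kingAdj s K ∧ ¬ rookAttacks {K} r s :=
    fun s hsb hsK h1 h2 =>
      ⟨kingAdj_iff_cheb_eq_one.2 hsb, (two_le_cheb_iff.1 hsK).1, (two_le_cheb_iff.1 hsK).2,
        not_rookAttacks_of_ne_of_ne h1 h2⟩
  rcases le_max_iff.1 (two_le_cheb_iff.2 ⟨hKb, hKadj⟩) with hfile | hrank
  · obtain ⟨y₁, h₁b, h₁K, h₁r⟩ := Fin.exists_near_far_ne b.1 hb1 (by omega) hfile r.1
    obtain ⟨y₂, h₂b, h₂r⟩ := Fin.exists_dist_eq_one_ne b.2 hb2 (by omega) r.2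
    exact ⟨(y₁, y₂), safe _ ((max_eq_right (h₁b.trans h₂b.ge)).trans h₂b)
      (le_max_of_le_left h₁K) h₁r h₂r⟩
  · obtain ⟨y₁, h₁b, h₁r⟩ := Fin.exists_dist_eq_one_ne b.1 hb1 (by omega) r.1
    obtain ⟨y₂, h₂b, h₂K, h₂r⟩ := Fin.exists_near_far_ne b.2 hb2 (by omega) hrank r.2
    exact ⟨(y₁, y₂), safe _ ((max_eq_left (h₂b.trans h₁b.ge)).trans h₁b)
      (le_max_of_le_right h₂K) h₁r h₂r⟩

/-- A lone white king and rook can never checkmate or stalemate a black king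
that is not on the edge of the board: the black king always has a safe move. -/
theorem black_king_not_on_edge_has_safe_square
    (b K r : Square)
    (hb1 : 1 ≤ (b.1 : ℕ)) (hb1' : (b.1 : ℕ) ≤ 6)
    (hb2 : 1 ≤ (b.2 : ℕ)) (hb2' : (b.2 : ℕ) ≤ 6)
    (hKb : K ≠ b) (hKadj : ¬ kingAdj K b)
    (hrb : r ≠ b) (hrK : r ≠ K) :
    ∃ s : Square, kingAdj s b ∧ s ≠ K ∧ ¬ kingAdj s K ∧
      ¬ rookAttacks {K} r s :=
  black_king_not_on_edge_has_safe_square_general b K r hb1 hb1' hb2 hb2' hKb hKadj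
end

section
/- Let a and b be natural numbers with 2 ≤ a ≤ 7 and 2 ≤ b ≤ 7, and regard (1,b), (a,1), and (a,b) as squares (in the paper's setup the white king is at (0,0), the white queen at (a,b), the target square is (1,1), and (1,b), (a,1) are the two waypoints of the queen's two rook-like routes to the target). Suppose s is a square with s ≠ (a,b) that is king-adjacent to both waypoints (1,b) and (a,1) (a black king threatening both waypoints). Then a ≤ 3, b ≤ 3, and s is king-adjacent to (a,b); in particular the queen on (a,b) could immediately capture the black king on s. (This is the key case analysis in the proof of the paper's Lemma 5.) -/
namespace kingAdj

variable {p q : Square}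

theorem abs_fz_sub_le (h : kingAdj p q) : |fz p - fz q| ≤ 1 :=
  h.2 ▸ le_max_left _ _

theorem abs_rz_sub_le (h : kingAdj p q) : |rz p - rz q| ≤ 1 :=
  h.2 ▸ le_max_right _ _

end kingAdj

theorem cheb_pos_of_ne {p q : Square} (hne : p ≠ q) : 0 < cheb p q := by
  contrapose! hne
  obtain ⟨hf, hr⟩ := max_le_iff.mp hne
  simp only [fz, rz, abs_nonpos_iff, sub_eq_zero, Nat.cast_inj] at hf hr
  exact Prod.ext (Fin.ext hf) (Fin.ext hr)

theorem kingAdj_of_ne_of_abs_le {p q : Square} (hne : p ≠ q)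
    (hf : |fz p - fz q| ≤ 1) (hr : |rz p - rz q| ≤ 1) : kingAdj p q :=
  ⟨hne, le_antisymm (max_le hf hr) (cheb_pos_of_ne hne)⟩

theorem both_waypoints_threatened_implies_capture_general
    (a b : Fin 8)
    (s : Square) (hs : s ≠ (a, b))
    (h1 : kingAdj s ((1 : Fin 8), b))
    (h2 : kingAdj s (a, (1 : Fin 8))) :
    (a : ℕ) ≤ 3 ∧ (b : ℕ) ≤ 3 ∧ kingAdj s (a, b) := by
  have hx₁ := h1.abs_fz_sub_le
  have hy₁ := h1.abs_rz_sub_le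
  have hx₂ := h2.abs_fz_sub_le
  have hy₂ := h2.abs_rz_sub_le
  simp only [fz, rz, Fin.val_one, abs_le] at hx₁ hy₁ hx₂ hy₂
  refine ⟨by omega, by omega, kingAdj_of_ne_of_abs_le hs ?_ ?_⟩ <;>
    simp only [fz, rz, abs_le] <;> omega

/-- If a black king threatens both waypoints `(1,b)` and `(a,1)` of the queen's
two rook-like routes from `(a,b)` to `(1,1)` (with `2 ≤ a,b ≤ 7`), then
`a ≤ 3`, `b ≤ 3`, and the black king stands next to the queen, so the queen
can capture it. -/
theorem both_waypoints_threatened_implies_capture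
    (a b : Fin 8)
    (ha2 : 2 ≤ (a : ℕ)) (ha7 : (a : ℕ) ≤ 7)
    (hb2 : 2 ≤ (b : ℕ)) (hb7 : (b : ℕ) ≤ 7)
    (s : Square) (hs : s ≠ (a, b))
    (h1 : kingAdj s ((1 : Fin 8), b))
    (h2 : kingAdj s (a, (1 : Fin 8))) :
    (a : ℕ) ≤ 3 ∧ (b : ℕ) ≤ 3 ∧ kingAdj s (a, b) :=
  both_waypoints_threatened_implies_capture_general a b s hs h1 h2
end

section
/- Let the black king be on the square b = (x,7) of the last rank, and let two white rooks be on r₁ = (a,6) and r₂ = (c,7), where the integer distances satisfy |a − x| ≥ 2 and |c − x| ≥ 2 (so neither rook is king-adjacent to the black king and can be captured). Then b is attacked by the rook on r₂ given blockers {r₁, r₂}, and every square s that is king-adjacent to b is attacked by the rook on r₁ or by the rook on r₂ given blockers {r₁, r₂} (the black king is not counted as a blocker because it vacates b when it moves). Hence the black king has no safe square and is lost. (This is the mate pattern concluding the staircase strategy in the paper's Lemma 18 for king and two rooks versus king.) -/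
/-!
Every square next to a king on the last rank lies on rank 6 or 7 at file distance at most 1
from the king, hence on neither rook's file. A rook attacks every other square of its rank
unless a blocker stands on that rank, and each rook is alone on its rank; so the rook on rank 6
covers the rank-6 escape squares, and the rook on rank 7 gives check and covers the rest.
-/

theorem strictlyBetween.snd_eq {p t q : ℤ × ℤ} (h : strictlyBetween p t q) (hpq : p.2 = q.2) :
    t.2 = p.2 := by
  obtain ⟨-, -, -, -, -, hmin, hmax⟩ := h
  rw [← hpq, min_self] at hmin
  rw [← hpq, max_self] at hmax
  exact le_antisymm hmax hmin

theorem rookAttacks_of_snd_eq {B : Set Square} {r s : Square} (hrs : r ≠ s) (hrank : r.2 = s.2)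
    (hB : ∀ t ∈ B, t.2 = r.2 → t = r) : rookAttacks B r s := by
  refine ⟨hrs, Or.inr hrank, fun t ht hbtw => hbtw.2.1 (congrArg zpt (hB t ht ?_))⟩
  simpa only [zpt, rz, Nat.cast_inj, Fin.val_inj] using hbtw.snd_eq (by simp [zpt, rz, hrank])

theorem kingAdj.abs_fz_sub_le_one {p q : Square} (h : kingAdj p q) : |fz p - fz q| ≤ 1 :=
  h.2 ▸ le_max_left _ _

theorem kingAdj.abs_rz_sub_le_one {p q : Square} (h : kingAdj p q) : |rz p - rz q| ≤ 1 :=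
  h.2 ▸ le_max_right _ _

/-- The two-rook mate pattern on the last rank: with the black king on `(x,7)`,
rooks on `(a,6)` and `(c,7)` both at file-distance at least 2 from the black
king, the black king is attacked and every adjacent square is attacked. -/
theorem two_rooks_last_rank_mate
    (x a c : Fin 8)
    (ha : 2 ≤ |(a : ℤ) - (x : ℤ)|) (hc : 2 ≤ |(c : ℤ) - (x : ℤ)|)
    (b r₁ r₂ : Square)
    (hb : b = (x, 7)) (h1 : r₁ = (a, 6)) (h2 : r₂ = (c, 7)) :
    rookAttacks {r₁, r₂} r₂ b ∧
      ∀ s : Square, kingAdj s b →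
        rookAttacks {r₁, r₂} r₁ s ∨ rookAttacks {r₁, r₂} r₂ s := by
  subst hb h1 h2
  have hB₁ : ∀ t ∈ ({(a, 6), (c, 7)} : Set Square), t.2 = 6 → t = (a, 6) := by simp
  have hB₂ : ∀ t ∈ ({(a, 6), (c, 7)} : Set Square), t.2 = 7 → t = (c, 7) := by simp
  have off_file : ∀ {f : Fin 8}, 2 ≤ |(f : ℤ) - x| → ∀ {s : Square}, |fz s - x| ≤ 1 →
      ∀ r, (f, r) ≠ s := by
    rintro f hf s hs r rfl
    exact absurd (hf.trans hs) (by norm_num)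
  refine ⟨rookAttacks_of_snd_eq (off_file hc (by simp [fz]) 7) rfl hB₂, fun s hs => ?_⟩
  have hfile : |fz s - x| ≤ 1 := hs.abs_fz_sub_le_one
  have hrank : s.2 = 6 ∨ s.2 = 7 := by
    have := hs.abs_rz_sub_le_one
    simp only [rz, abs_le] at this
    omega
  rcases hrank with h6 | h7
  · exact .inl (rookAttacks_of_snd_eq (off_file ha hfile 6) h6.symm hB₁)
  · exact .inr (rookAttacks_of_snd_eq (off_file hc hfile 7) h7.symm hB₂)
end

section
/- Let the black king be on the square b = (x,7) of the last rank, let the white queen be on q = (x,6) (directly below the black king), and let the white king be on a square K that is king-adjacent to q but not king-adjacent to b. Then b is attacked by the queen on q given blockers {K}, the queen's square q is king-adjacent to K (so the queen is defended), and every square s that is king-adjacent to b satisfies: s = q, or s = K, or s is king-adjacent to K, or s is attacked by the queen on q given blockers {K}. Hence the black king has no safe square and is lost. (This is the protected-queen mate pattern used to finish the king-and-queen-versus-king strategy in the paper's Lemmas 12 and 13.) -/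
/-!
Nothing lies strictly between two king-adjacent squares, so a queen attacks every square
adjacent to it whatever the blockers. On the last rank, every neighbour of the black king
`(x, 7)` other than the queen's square `(x, 6)` is adjacent to the queen, so the queen
attacks all of them as well as the king itself, and the white king defends the queen.
-/

theorem kingAdj_comm {p q : Square} : kingAdj p q ↔ kingAdj q p := by
  simp only [kingAdj, cheb, ne_comm, abs_sub_comm (fz p), abs_sub_comm (rz p)]

theorem kingAdj_iff {p q : Square} :
    kingAdj p q ↔ p ≠ q ∧ |fz p - fz q| ≤ 1 ∧ |rz p - rz q| ≤ 1 := by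
  have hne : p ≠ q ↔ fz p ≠ fz q ∨ rz p ≠ rz q := by
    simp only [fz, rz, ne_eq, Prod.ext_iff, Fin.ext_iff, Int.natCast_inj, not_and_or]
  simp only [kingAdj, cheb, hne, abs_eq_max_neg]
  omega

theorem not_strictlyBetween_of_abs_sub_le_one {p q t : ℤ × ℤ}
    (h₁ : |p.1 - q.1| ≤ 1) (h₂ : |p.2 - q.2| ≤ 1) : ¬ strictlyBetween p t q := by
  rintro ⟨hcol, htp, htq, hx₁, hx₂, hy₁, hy₂⟩
  rw [abs_le] at h₁ h₂
  rw [ne_eq, Prod.ext_iff] at htp htq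
  -- the bounding box has side at most 1, so each coordinate of `t` is one of `p`'s or `q`'s
  have hx : t.1 = p.1 ∨ t.1 = q.1 := by omega
  have hy : t.2 = p.2 ∨ t.2 = q.2 := by omega
  rcases hx with hx | hx <;> rcases hy with hy | hy
  · omega
  · rw [hx, hy, sub_self, zero_mul, zero_eq_mul] at hcol
    omega
  · rw [hx, hy, sub_self, zero_mul, mul_eq_zero] at hcol
    omega
  · omega

theorem queenAttacks_of_kingAdj (B : Set Square) {q s : Square} (h : kingAdj q s) :
    queenAttacks B q s := by
  obtain ⟨hne, hf, hr⟩ := kingAdj_iff.1 h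
  refine ⟨hne, ?_, fun t _ => not_strictlyBetween_of_abs_sub_le_one hf hr⟩
  have hline : fz q = fz s ∨ rz q = rz s ∨ |fz q - fz s| = |rz q - rz s| := by
    simp only [abs_eq_max_neg] at hf hr ⊢
    omega
  simpa only [fz, rz, Int.natCast_inj, Fin.val_inj] using hline

theorem kingAdj_below_of_kingAdj_lastRank {x : Fin 8} {s : Square} (hs : kingAdj s (x, 7))
    (hsq : s ≠ (x, 6)) : kingAdj s (x, 6) := by
  obtain ⟨-, hf, hr⟩ := kingAdj_iff.1 hs
  refine kingAdj_iff.2 ⟨hsq, hf, ?_⟩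
  have hlast : rz s ≤ 7 := by simp only [rz]; omega
  simp only [rz, abs_le] at hr hlast ⊢
  omega

theorem protected_queen_mate_general
    (x : Fin 8) (b q K : Square)
    (hb : b = (x, 7)) (hq : q = (x, 6))
    (hKq : kingAdj K q) :
    queenAttacks {K} q b ∧ kingAdj q K ∧
      ∀ s : Square, kingAdj s b →
        s = q ∨ s = K ∨ kingAdj s K ∨ queenAttacks {K} q s := by
  subst hb hq
  have hqb : kingAdj (x, 6) (x, 7) := kingAdj_iff.2 ⟨by simp, by simp [fz], by norm_num [rz]⟩
  refine ⟨queenAttacks_of_kingAdj _ hqb, kingAdj_comm.1 hKq, fun s hs => ?_⟩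
  by_cases hsq : s = (x, 6)
  · exact Or.inl hsq
  · exact Or.inr (Or.inr (Or.inr
      (queenAttacks_of_kingAdj _ (kingAdj_comm.1 (kingAdj_below_of_kingAdj_lastRank hs hsq)))))

/-- The protected-queen mate pattern: black king on `(x,7)`, white queen on
`(x,6)`, white king adjacent to the queen but not to the black king. Then the
black king is attacked and has no safe square. -/
theorem protected_queen_mate
    (x : Fin 8) (b q K : Square)
    (hb : b = (x, 7)) (hq : q = (x, 6))
    (hKq : kingAdj K q) (hKb : ¬ kingAdj K b) :
    queenAttacks {K} q b ∧ kingAdj q K ∧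
      ∀ s : Square, kingAdj s b →
        s = q ∨ s = K ∨ kingAdj s K ∨ queenAttacks {K} q s :=
  protected_queen_mate_general x b q K hb hq hKq
end

section
/- Let two white rooks be on squares r₁ = (a, y) and r₂ = (c, y) on a common rank y with a ≠ c, and let the white king be on a square K whose rank is different from y. Then the rook on r₁ attacks r₂ and the rook on r₂ attacks r₁ given blockers {r₁, r₂, K} (the rooks cover each other), and every square (x, y) on rank y with x ∉ {a, c} is attacked by the rook on r₁ or by the rook on r₂ given blockers {r₁, r₂, K}. (This is the configuration established in the paper's Lemma 16: two mutually covering rooks on one rank not containing their own king dominate that entire rank.) -/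
open Set

theorem Set.notMem_uIoo_of_mem_uIoo {α : Type*} [LinearOrder α] {a c x : α}
    (h : c ∈ uIoo a x) : a ∉ uIoo c x := by
  rcases le_total a x with hax | hxa
  · rw [uIoo_of_le hax] at h
    rw [uIoo_of_le h.2.le]
    exact fun h' => h'.1.not_gt h.1
  · rw [uIoo_of_ge hxa] at h
    rw [uIoo_of_ge h.1.le]
    exact fun h' => h'.2.not_gt h.2

theorem rookAttacks_along_rank {B : Set Square} {a x y : Fin 8} (hax : a ≠ x)
    (hB : ∀ t ∈ B, t.2 = y → t.1 ∉ uIoo a x) : rookAttacks B (a, y) (x, y) := by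
  refine ⟨fun h => hax (congrArg Prod.fst h), Or.inr rfl, ?_⟩
  rintro t ht ⟨-, hta, htx, hmin, hmax, hrmin, hrmax⟩
  simp only [zpt, fz, rz, min_self, max_self, ne_eq, Prod.mk.injEq] at hta htx hmin hmax hrmin hrmax
  refine hB t ht (Fin.ext (by omega)) ?_
  simp only [uIoo, mem_Ioo, Fin.lt_def, Fin.coe_min, Fin.coe_max]
  omega

/-- Two rooks on a common rank not containing their own king cover each other
and dominate that entire rank. -/
theorem two_rooks_on_one_rank
    (a c y : Fin 8) (hac : a ≠ c)
    (K : Square) (hK : K.2 ≠ y)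
    (r₁ r₂ : Square) (h1 : r₁ = (a, y)) (h2 : r₂ = (c, y)) :
    rookAttacks {r₁, r₂, K} r₁ r₂ ∧ rookAttacks {r₁, r₂, K} r₂ r₁ ∧
      ∀ x : Fin 8, x ≠ a → x ≠ c →
        rookAttacks {r₁, r₂, K} r₁ (x, y) ∨
          rookAttacks {r₁, r₂, K} r₂ (x, y) := by
  subst h1 h2
  have hrooks : ∀ {u x : Fin 8}, u ≠ x → a ∉ uIoo u x → c ∉ uIoo u x →
      rookAttacks {(a, y), (c, y), K} (u, y) (x, y) := by
    intro u x hux ha hc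
    refine rookAttacks_along_rank hux ?_
    rintro t (rfl | rfl | rfl) hty
    exacts [ha, hc, absurd hty hK]
  refine ⟨hrooks hac left_notMem_uIoo right_notMem_uIoo,
    hrooks hac.symm right_notMem_uIoo left_notMem_uIoo, fun x hxa hxc => ?_⟩
  by_cases hcx : c ∈ uIoo a x
  · exact .inr (hrooks hxc.symm (notMem_uIoo_of_mem_uIoo hcx) left_notMem_uIoo)
  · exact .inl (hrooks hxa.symm left_notMem_uIoo hcx)
end
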